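/- Lax representation of the (2+1) nonlinear analogue of the mKdV equation (equations (2.2), (2.4), (2.5)): let u, v, w : ℝ² × ℝ → ℝ be smooth functions satisfying ∂u/∂t = ∂³u/∂x³ + ∂³u/∂y³ + ∂_y(v·u) + ∂_x(w·u) − (1/2)(v_y + w_x)·u, together with v_x = 3·∂_y(u²) and w_y = 3·∂_x(u²). Define, for smooth ψ = (ψ₁, ψ₂) : ℝ² × ℝ → ℂ², the operators Lψ = (∂_x ψ₁ + u ψ₂, −u ψ₁ + ∂_y ψ₂), Pψ = (𝔇ψ₁ − (1/2)v_y ψ₁ − 3u_x ∂_x ψ₂, 3u_y ∂_y ψ₁ + 𝔇ψ₂ − (1/2)w_x ψ₂), and Qψ = (𝔇ψ₁ − ((1/2)v_y + w_x)ψ₁ + 3∂_y(u_y ψ₂), −3∂_x(u_x ψ₁) + 𝔇ψ₂ − ((1/2)w_x + v_y)ψ₂), where 𝔇φ = ∂_t φ − ∂³_x φ − ∂³_y φ − v·∂_y φ − w·∂_x φ. Then for every smooth ψ : ℝ² × ℝ → ℂ², L(Pψ) = Q(Lψ). -/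

import Mathlib

open MeasureTheory

/-- `∂_x` for functions of `((x,y),t)`. -/
noncomputable def dX {E : Type*} [NormedAddCommGroup E] [NormedSpace ℝ E]
    (f : (ℝ × ℝ) × ℝ → E) : (ℝ × ℝ) × ℝ → E :=
  fun q => deriv (fun x => f ((x, q.1.2), q.2)) q.1.1

/-- `∂_y` for functions of `((x,y),t)`. -/
noncomputable def dY {E : Type*} [NormedAddCommGroup E] [NormedSpace ℝ E]
    (f : (ℝ × ℝ) × ℝ → E) : (ℝ × ℝ) × ℝ → E :=
  fun q => deriv (fun y => f ((q.1.1, y), q.2)) q.1.2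

/-- `∂_t` for functions of `((x,y),t)`. -/
noncomputable def dT {E : Type*} [NormedAddCommGroup E] [NormedSpace ℝ E]
    (f : (ℝ × ℝ) × ℝ → E) : (ℝ × ℝ) × ℝ → E :=
  fun q => deriv (fun t => f (q.1, t)) q.2

/-- `𝔇 = ∂_t − ∂³_x − ∂³_y − v ∂_y − w ∂_x`. -/
noncomputable def Dfrak (v w : (ℝ × ℝ) × ℝ → ℝ) (φ : (ℝ × ℝ) × ℝ → ℂ) :
    (ℝ × ℝ) × ℝ → ℂ :=
  fun q => dT φ q - dX (dX (dX φ)) q - dY (dY (dY φ)) q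
    - (v q : ℂ) * dY φ q - (w q : ℂ) * dX φ q

/-- The Lax operator `L` of (2.5). -/
noncomputable def Lop (u : (ℝ × ℝ) × ℝ → ℝ)
    (ψ : ((ℝ × ℝ) × ℝ → ℂ) × ((ℝ × ℝ) × ℝ → ℂ)) :
    ((ℝ × ℝ) × ℝ → ℂ) × ((ℝ × ℝ) × ℝ → ℂ) :=
  (fun q => dX ψ.1 q + (u q : ℂ) * ψ.2 q,
   fun q => -(u q : ℂ) * ψ.1 q + dY ψ.2 q)

/-- The operator `P` of (2.5). -/
noncomputable def Pop (u v w : (ℝ × ℝ) × ℝ → ℝ)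
    (ψ : ((ℝ × ℝ) × ℝ → ℂ) × ((ℝ × ℝ) × ℝ → ℂ)) :
    ((ℝ × ℝ) × ℝ → ℂ) × ((ℝ × ℝ) × ℝ → ℂ) :=
  (fun q => Dfrak v w ψ.1 q - (1 / 2 : ℂ) * ((dY v q : ℝ) : ℂ) * ψ.1 q
      - 3 * ((dX u q : ℝ) : ℂ) * dX ψ.2 q,
   fun q => 3 * ((dY u q : ℝ) : ℂ) * dY ψ.1 q + Dfrak v w ψ.2 q
      - (1 / 2 : ℂ) * ((dX w q : ℝ) : ℂ) * ψ.2 q)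

/-- The operator `Q` of (2.5). -/
noncomputable def Qop (u v w : (ℝ × ℝ) × ℝ → ℝ)
    (ψ : ((ℝ × ℝ) × ℝ → ℂ) × ((ℝ × ℝ) × ℝ → ℂ)) :
    ((ℝ × ℝ) × ℝ → ℂ) × ((ℝ × ℝ) × ℝ → ℂ) :=
  (fun q => Dfrak v w ψ.1 q
      - ((1 / 2 : ℂ) * ((dY v q : ℝ) : ℂ) + ((dX w q : ℝ) : ℂ)) * ψ.1 q
      + 3 * dY (fun r => ((dY u r : ℝ) : ℂ) * ψ.2 r) q,
   fun q => -3 * dX (fun r => ((dX u r : ℝ) : ℂ) * ψ.1 r) q + Dfrak v w ψ.2 q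
      - ((1 / 2 : ℂ) * ((dX w q : ℝ) : ℂ) + ((dY v q : ℝ) : ℂ)) * ψ.2 q)


noncomputable section PD
variable {E : Type*} [NormedAddCommGroup E] [NormedSpace ℝ E]

/-- directional derivative -/
def pd (d : (ℝ × ℝ) × ℝ) (f : (ℝ × ℝ) × ℝ → E) : (ℝ × ℝ) × ℝ → E :=
  fun q => fderiv ℝ f q d

def eX : (ℝ × ℝ) × ℝ := ((1, 0), 0)
def eY : (ℝ × ℝ) × ℝ := ((0, 1), 0)
def eT : (ℝ × ℝ) × ℝ := ((0, 0), 1)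

@[fun_prop]
lemma contDiff_pd (d : (ℝ × ℝ) × ℝ) {f : (ℝ × ℝ) × ℝ → E} (hf : ContDiff ℝ (⊤ : ℕ∞) f) :
    ContDiff ℝ (⊤ : ℕ∞) (pd d f) :=
  (hf.fderiv_right (by simp)).clm_apply contDiff_const

@[fun_prop]
lemma contDiff_ofReal_comp {f : (ℝ × ℝ) × ℝ → ℝ} (hf : ContDiff ℝ (⊤ : ℕ∞) f) :
    ContDiff ℝ (⊤ : ℕ∞) (fun q => ((f q : ℝ) : ℂ)) :=
  Complex.ofRealCLM.contDiff.comp hf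

end PD

section PD2
variable {E : Type*} [NormedAddCommGroup E] [NormedSpace ℝ E]
  {f g : (ℝ × ℝ) × ℝ → E}

lemma dX_eq (hf : ContDiff ℝ (⊤ : ℕ∞) f) : dX f = pd eX f := by
  funext q
  have hγ : HasDerivAt (fun x : ℝ => ((x, q.1.2), q.2)) eX q.1.1 :=
    ((hasDerivAt_id q.1.1).prodMk (hasDerivAt_const _ _)).prodMk (hasDerivAt_const _ _)
  have := (hf.differentiable (by simp) ((q.1.1, q.1.2), q.2)).hasFDerivAt.comp_hasDerivAt q.1.1 hγ
  simpa [dX, pd, Function.comp_def] using this.deriv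

lemma dY_eq (hf : ContDiff ℝ (⊤ : ℕ∞) f) : dY f = pd eY f := by
  funext q
  have hγ : HasDerivAt (fun y : ℝ => ((q.1.1, y), q.2)) eY q.1.2 :=
    ((hasDerivAt_const _ _).prodMk (hasDerivAt_id q.1.2)).prodMk (hasDerivAt_const _ _)
  have := (hf.differentiable (by simp) ((q.1.1, q.1.2), q.2)).hasFDerivAt.comp_hasDerivAt q.1.2 hγ
  simpa [dY, pd, Function.comp_def] using this.deriv

lemma dT_eq (hf : ContDiff ℝ (⊤ : ℕ∞) f) : dT f = pd eT f := by
  funext q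
  have hγ : HasDerivAt (fun t : ℝ => (q.1, t)) eT q.2 :=
    (hasDerivAt_const _ _).prodMk (hasDerivAt_id q.2)
  have := (hf.differentiable (by simp) (q.1, q.2)).hasFDerivAt.comp_hasDerivAt q.2 hγ
  simpa [dT, pd, Function.comp_def] using this.deriv

lemma pd_comm (d₁ d₂ : (ℝ × ℝ) × ℝ) (hf : ContDiff ℝ (⊤ : ℕ∞) f) :
    pd d₁ (pd d₂ f) = pd d₂ (pd d₁ f) := by
  funext q
  have hdf : DifferentiableAt ℝ (fderiv ℝ f) q :=
    ((hf.fderiv_right (m := (⊤ : ℕ∞)) (by simp)).differentiable (by simp)) q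
  have h1 : ∀ d : (ℝ × ℝ) × ℝ, pd d₁ (pd d f) q = fderiv ℝ (fderiv ℝ f) q d₁ d := by
    intro d
    have : pd d f = fun q => (fderiv ℝ f q) d := rfl
    rw [pd, this, fderiv_clm_apply hdf (differentiableAt_const d)]
    simp
  have h2 : ∀ d : (ℝ × ℝ) × ℝ, pd d₂ (pd d f) q = fderiv ℝ (fderiv ℝ f) q d₂ d := by
    intro d
    have : pd d f = fun q => (fderiv ℝ f q) d := rfl
    rw [pd, this, fderiv_clm_apply hdf (differentiableAt_const d)]
    simp
  rw [h1 d₂, h2 d₁]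
  exact (hf.contDiffAt.isSymmSndFDerivAt (by norm_num; exact WithTop.coe_le_coe.mpr le_top)) d₁ d₂
end PD2

section Alg
variable {E : Type*} [NormedAddCommGroup E] [NormedSpace ℝ E]
variable {A : Type*} [NormedCommRing A] [NormedAlgebra ℝ A]
variable {d : (ℝ × ℝ) × ℝ}

lemma pd_add {f g : (ℝ × ℝ) × ℝ → E} (hf : ContDiff ℝ (⊤ : ℕ∞) f) (hg : ContDiff ℝ (⊤ : ℕ∞) g) :
    pd d (fun q => f q + g q) = fun q => pd d f q + pd d g q := by
  funext q
  simp only [pd]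
  rw [fderiv_fun_add (hf.differentiable (by simp) q)
    (hg.differentiable (by simp) q)]
  rfl

lemma pd_sub {f g : (ℝ × ℝ) × ℝ → E} (hf : ContDiff ℝ (⊤ : ℕ∞) f) (hg : ContDiff ℝ (⊤ : ℕ∞) g) :
    pd d (fun q => f q - g q) = fun q => pd d f q - pd d g q := by
  funext q
  simp only [pd]
  rw [fderiv_fun_sub (hf.differentiable (by simp) q)
    (hg.differentiable (by simp) q)]
  rfl

lemma pd_neg {f : (ℝ × ℝ) × ℝ → E} :
    pd d (fun q => -f q) = fun q => -pd d f q := by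
  funext q; simp only [pd, fderiv_fun_neg]; rfl

lemma pd_mul {f g : (ℝ × ℝ) × ℝ → A} (hf : ContDiff ℝ (⊤ : ℕ∞) f) (hg : ContDiff ℝ (⊤ : ℕ∞) g) :
    pd d (fun q => f q * g q) = fun q => pd d f q * g q + f q * pd d g q := by
  funext q
  simp only [pd]
  rw [fderiv_fun_mul (hf.differentiable (by simp) q)
    (hg.differentiable (by simp) q)]
  simp [smul_eq_mul]
  ring

lemma pd_const {c : E} : pd d (fun _ => c) = fun _ => 0 := by
  funext q; simp [pd]

lemma pd_ofReal {f : (ℝ × ℝ) × ℝ → ℝ} (hf : ContDiff ℝ (⊤ : ℕ∞) f) :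
    pd d (fun q => ((f q : ℝ) : ℂ)) = fun q => ((pd d f q : ℝ) : ℂ) := by
  funext q
  simp only [pd]
  have h := (Complex.ofRealCLM.hasFDerivAt.comp q
    (hf.differentiable (by simp) q).hasFDerivAt).fderiv
  rw [show (fun q => ((f q : ℝ) : ℂ)) = ⇑Complex.ofRealCLM ∘ f from rfl, h]
  rfl

end Alg


lemma pd_yx {f : (ℝ × ℝ) × ℝ → ℂ} (hf : ContDiff ℝ (⊤ : ℕ∞) f) :
    pd eY (pd eX f) = pd eX (pd eY f) := pd_comm _ _ hf
lemma pd_tx {f : (ℝ × ℝ) × ℝ → ℂ} (hf : ContDiff ℝ (⊤ : ℕ∞) f) :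
    pd eT (pd eX f) = pd eX (pd eT f) := pd_comm _ _ hf
lemma pd_ty {f : (ℝ × ℝ) × ℝ → ℂ} (hf : ContDiff ℝ (⊤ : ℕ∞) f) :
    pd eT (pd eY f) = pd eY (pd eT f) := pd_comm _ _ hf
lemma pd_yx' {f : (ℝ × ℝ) × ℝ → ℝ} (hf : ContDiff ℝ (⊤ : ℕ∞) f) :
    pd eY (pd eX f) = pd eX (pd eY f) := pd_comm _ _ hf

set_option maxHeartbeats 4000000 in
/-- Lax representation (2.2) of the (2+1) nonlinear analogue of the mKdV equation
(2.4): if `u, v, w` satisfy (2.4), then `L(Pψ) = Q(Lψ)` for all smooth `ψ`. -/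
theorem mKdV_Lax_representation
    (u v w : (ℝ × ℝ) × ℝ → ℝ)
    (hu : ContDiff ℝ (⊤ : ℕ∞) u) (hv : ContDiff ℝ (⊤ : ℕ∞) v) (hw : ContDiff ℝ (⊤ : ℕ∞) w)
    (heq : ∀ q : (ℝ × ℝ) × ℝ,
      dT u q = dX (dX (dX u)) q + dY (dY (dY u)) q
        + dY (fun r => v r * u r) q + dX (fun r => w r * u r) q
        - (1 / 2) * (dY v q + dX w q) * u q)
    (hvx : ∀ q : (ℝ × ℝ) × ℝ, dX v q = 3 * dY (fun r => u r ^ 2) q)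
    (hwy : ∀ q : (ℝ × ℝ) × ℝ, dY w q = 3 * dX (fun r => u r ^ 2) q) :
    ∀ ψ₁ ψ₂ : (ℝ × ℝ) × ℝ → ℂ, ContDiff ℝ (⊤ : ℕ∞) ψ₁ → ContDiff ℝ (⊤ : ℕ∞) ψ₂ →
      Lop u (Pop u v w (ψ₁, ψ₂)) = Qop u v w (Lop u (ψ₁, ψ₂)) := by
  intro ψ₁ ψ₂ h1 h2
  rw [Prod.ext_iff]
  constructor <;> funext q <;>
  · simp only [Lop, Pop, Qop, Dfrak]
    have hT := heq q
    have hV := hvx q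
    have hW := hwy q
    have hVy := congrFun (congrArg (pd eY) (funext hvx)) q
    have hWx := congrFun (congrArg (pd eX) (funext hwy)) q
    simp (disch := fun_prop) only [pow_two, dX_eq, dY_eq, dT_eq, pd_add, pd_sub, pd_neg,
      pd_mul, pd_ofReal, pd_const, pd_yx, pd_tx, pd_ty, pd_yx', zero_mul, mul_zero,
      add_zero, zero_add] at hT hV hW hVy hWx ⊢
    simp only [hT, hV, hW, hVy, hWx]
    push_cast
    ring
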